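/- arXiv:2311.05226 — 4 statements merged into one kernel-verified Lean document; each statement's English description precedes it below -/
import Mathlib

section
/- Let μ ∈ ℝ, and let u be a smooth solution of the Degasperis–Procesi equation u_t - u_{txx} + 4uu_x = 3u_x u_{xx} + u u_{xxx}. Then the one-forms ω₁ = (u-u_{xx})dx + (u_x² - 2uu_x + uu_{xx})dt, ω₂ = (μ(u-u_{xx}) + 2√(1+μ²))dx + μ(u_x² - 2uu_x + uu_{xx})dt, ω₃ = (√(1+μ²)(u-u_{xx}) + 2μ)dx + √(1+μ²)(u_x² - 2uu_x + uu_{xx})dt satisfy the pseudospherical structure equations dω₁ = ω₃∧ω₂, dω₂ = ω₁∧ω₃, dω₃ = ω₁∧ω₂. -/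
noncomputable def pdx (u : ℝ → ℝ → ℝ) : ℝ → ℝ → ℝ := fun x t => deriv (fun y => u y t) x
noncomputable def pdt (u : ℝ → ℝ → ℝ) : ℝ → ℝ → ℝ := fun x t => deriv (fun s => u x s) t

/-- Momentum `m = u - u_{xx}`. -/
noncomputable def mDP (u : ℝ → ℝ → ℝ) : ℝ → ℝ → ℝ := fun x t => u x t - pdx (pdx u) x t

/-- `F = u_x² - 2uu_x + uu_{xx}`, the common `dt`-coefficient. -/
noncomputable def Fcoef (u : ℝ → ℝ → ℝ) : ℝ → ℝ → ℝ :=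
  fun x t => (pdx u x t) ^ 2 - 2 * u x t * pdx u x t + u x t * pdx (pdx u) x t

open Function

section aux

variable {f : ℝ → ℝ → ℝ}

lemma pdx_eq (hf : ContDiff ℝ (⊤ : ℕ∞) (uncurry f)) (x t : ℝ) :
    pdx f x t = fderiv ℝ (uncurry f) (x, t) (1, 0) := by
  have hg : HasDerivAt (fun y : ℝ => ((y, t) : ℝ × ℝ)) ((1 : ℝ), (0 : ℝ)) x :=
    (hasDerivAt_id x).prodMk (hasDerivAt_const x t)
  have h := ((hf.differentiable (by simp) (x, t)).hasFDerivAt).comp_hasDerivAt x hg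
  exact h.deriv

lemma pdt_eq (hf : ContDiff ℝ (⊤ : ℕ∞) (uncurry f)) (x t : ℝ) :
    pdt f x t = fderiv ℝ (uncurry f) (x, t) (0, 1) := by
  have hg : HasDerivAt (fun s : ℝ => ((x, s) : ℝ × ℝ)) ((0 : ℝ), (1 : ℝ)) t :=
    (hasDerivAt_const t x).prodMk (hasDerivAt_id t)
  have h := ((hf.differentiable (by simp) (x, t)).hasFDerivAt).comp_hasDerivAt t hg
  exact h.deriv

lemma contDiff_pdx (hf : ContDiff ℝ (⊤ : ℕ∞) (uncurry f)) : ContDiff ℝ (⊤ : ℕ∞) (uncurry (pdx f)) := by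
  have : uncurry (pdx f) = fun p : ℝ × ℝ => fderiv ℝ (uncurry f) p ((1 : ℝ), (0 : ℝ)) := by
    funext p
    cases p with
    | mk a b => exact pdx_eq hf a b
  rw [this]
  exact (hf.fderiv_right (by simp)).clm_apply contDiff_const

lemma contDiff_pdt (hf : ContDiff ℝ (⊤ : ℕ∞) (uncurry f)) : ContDiff ℝ (⊤ : ℕ∞) (uncurry (pdt f)) := by
  have : uncurry (pdt f) = fun p : ℝ × ℝ => fderiv ℝ (uncurry f) p ((0 : ℝ), (1 : ℝ)) := by
    funext p
    cases p with
    | mk a b => exact pdt_eq hf a b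
  rw [this]
  exact (hf.fderiv_right (by simp)).clm_apply contDiff_const

lemma pdt_pdx_comm (hf : ContDiff ℝ (⊤ : ℕ∞) (uncurry f)) (x t : ℝ) :
    pdt (pdx f) x t = pdx (pdt f) x t := by
  have h2 : ContDiff ℝ (⊤ : ℕ∞) (fderiv ℝ (uncurry f)) := hf.fderiv_right (by simp)
  set f'' := fderiv ℝ (fderiv ℝ (uncurry f)) (x, t) with hf''
  have hU' : ∀ y, HasFDerivAt (uncurry f) (fderiv ℝ (uncurry f) y) y := fun y =>
    (hf.differentiable (by simp) y).hasFDerivAt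
  have hU'' : HasFDerivAt (fderiv ℝ (uncurry f)) f'' (x, t) :=
    (h2.differentiable (by simp) (x, t)).hasFDerivAt
  have hsymm := second_derivative_symmetric hU' hU'' (1, 0) (0, 1)
  have key : ∀ v : ℝ × ℝ,
      fderiv ℝ (fun p : ℝ × ℝ => fderiv ℝ (uncurry f) p v) (x, t)
        = (ContinuousLinearMap.apply ℝ ℝ v).comp f'' := by
    intro v
    exact ((ContinuousLinearMap.apply ℝ ℝ v).hasFDerivAt.comp (x, t) hU'').fderiv
  have e1 : pdt (pdx f) x t = f'' (0, 1) (1, 0) := by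
    rw [pdt_eq (contDiff_pdx hf)]
    have hfun : uncurry (pdx f) = fun p : ℝ × ℝ => fderiv ℝ (uncurry f) p ((1 : ℝ), (0 : ℝ)) := by
      funext p; cases p with | mk a b => exact pdx_eq hf a b
    rw [hfun, key]
    rfl
  have e2 : pdx (pdt f) x t = f'' (1, 0) (0, 1) := by
    rw [pdx_eq (contDiff_pdt hf)]
    have hfun : uncurry (pdt f) = fun p : ℝ × ℝ => fderiv ℝ (uncurry f) p ((0 : ℝ), (1 : ℝ)) := by
      funext p; cases p with | mk a b => exact pdt_eq hf a b
    rw [hfun, key]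
    rfl
  rw [e1, e2, hsymm]

lemma hasDerivAt_slice_x (hf : ContDiff ℝ (⊤ : ℕ∞) (uncurry f)) (x t : ℝ) :
    HasDerivAt (fun y => f y t) (pdx f x t) x := by
  have hg : HasDerivAt (fun y : ℝ => ((y, t) : ℝ × ℝ)) ((1 : ℝ), (0 : ℝ)) x :=
    (hasDerivAt_id x).prodMk (hasDerivAt_const x t)
  have h := ((hf.differentiable (by simp) (x, t)).hasFDerivAt).comp_hasDerivAt x hg
  rw [pdx_eq hf]
  exact h

lemma hasDerivAt_slice_t (hf : ContDiff ℝ (⊤ : ℕ∞) (uncurry f)) (x t : ℝ) :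
    HasDerivAt (fun s => f x s) (pdt f x t) t := by
  have hg : HasDerivAt (fun s : ℝ => ((x, s) : ℝ × ℝ)) ((0 : ℝ), (1 : ℝ)) t :=
    (hasDerivAt_const t x).prodMk (hasDerivAt_id t)
  have h := ((hf.differentiable (by simp) (x, t)).hasFDerivAt).comp_hasDerivAt t hg
  rw [pdt_eq hf]
  exact h

end aux

/-- For a one-form `ω = f dx + g dt` we have `dω = (∂ₓ g - ∂ₜ f) dx∧dt`, and
`(f₁dx+g₁dt)∧(f₂dx+g₂dt) = (f₁g₂ - g₁f₂) dx∧dt`. Smooth solutions of the DP equation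
make the triad \eqref{1.0.12} satisfy the pseudospherical structure equations
`dω₁ = ω₃∧ω₂`, `dω₂ = ω₁∧ω₃`, `dω₃ = ω₁∧ω₂`. -/
theorem DP_pseudospherical_structure_equations (μ : ℝ) (u : ℝ → ℝ → ℝ)
    (hu : ContDiff ℝ (⊤ : ℕ∞) (Function.uncurry u))
    (hDP : ∀ x t : ℝ,
      pdt u x t - pdx (pdx (pdt u)) x t + 4 * u x t * pdx u x t
        = 3 * pdx u x t * pdx (pdx u) x t + u x t * pdx (pdx (pdx u)) x t) :
    ∀ x t : ℝ,
      -- dω₁ = ω₃ ∧ ω₂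
      (pdx (Fcoef u) x t - pdt (mDP u) x t
          = (Real.sqrt (1 + μ ^ 2) * mDP u x t + 2 * μ) * (μ * Fcoef u x t)
            - (Real.sqrt (1 + μ ^ 2) * Fcoef u x t)
              * (μ * mDP u x t + 2 * Real.sqrt (1 + μ ^ 2))) ∧
      -- dω₂ = ω₁ ∧ ω₃
      (pdx (fun a b => μ * Fcoef u a b) x t
          - pdt (fun a b => μ * mDP u a b + 2 * Real.sqrt (1 + μ ^ 2)) x t
          = mDP u x t * (Real.sqrt (1 + μ ^ 2) * Fcoef u x t)
            - Fcoef u x t * (Real.sqrt (1 + μ ^ 2) * mDP u x t + 2 * μ)) ∧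
      -- dω₃ = ω₁ ∧ ω₂
      (pdx (fun a b => Real.sqrt (1 + μ ^ 2) * Fcoef u a b) x t
          - pdt (fun a b => Real.sqrt (1 + μ ^ 2) * mDP u a b + 2 * μ) x t
          = mDP u x t * (μ * Fcoef u x t)
            - Fcoef u x t * (μ * mDP u x t + 2 * Real.sqrt (1 + μ ^ 2))) := by
  intro x t
  set s := Real.sqrt (1 + μ ^ 2) with hsdef
  have hs : s ^ 2 = 1 + μ ^ 2 := Real.sq_sqrt (by positivity)
  have a := hasDerivAt_slice_x hu x t
  have b := hasDerivAt_slice_x (contDiff_pdx hu) x t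
  have c := hasDerivAt_slice_x (contDiff_pdx (contDiff_pdx hu)) x t
  have ta := hasDerivAt_slice_t hu x t
  have tb := hasDerivAt_slice_t (contDiff_pdx (contDiff_pdx hu)) x t
  -- derivative of the x-slice of Fcoef
  have hF : HasDerivAt (fun y => Fcoef u y t)
      ((2 : ℕ) * pdx u x t ^ (2 - 1) * pdx (pdx u) x t
        - (2 * pdx (pdx u) x t * u x t + 2 * pdx u x t * pdx u x t)
        + (pdx u x t * pdx (pdx u) x t + u x t * pdx (pdx (pdx u)) x t)) x := by
    have h1 : HasDerivAt (fun y => (pdx u y t) ^ 2)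
        ((2 : ℕ) * pdx u x t ^ (2 - 1) * pdx (pdx u) x t) x := b.pow 2
    have h2 : HasDerivAt (fun y => 2 * u y t * pdx u y t)
        (2 * pdx (pdx u) x t * u x t + 2 * pdx u x t * pdx u x t) x := by
      have : HasDerivAt (fun y => 2 * u y t * pdx u y t)
          (2 * pdx u x t * pdx u x t + 2 * u x t * pdx (pdx u) x t) x := (a.const_mul 2).mul b
      convert this using 1
      ring
    have h3 : HasDerivAt (fun y => u y t * pdx (pdx u) y t)
        (pdx u x t * pdx (pdx u) x t + u x t * pdx (pdx (pdx u)) x t) x := a.mul c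
    exact (h1.sub h2).add h3
  have hFx : pdx (Fcoef u) x t
      = 3 * pdx u x t * pdx (pdx u) x t - 2 * (pdx u x t) ^ 2
        - 2 * u x t * pdx (pdx u) x t + u x t * pdx (pdx (pdx u)) x t := by
    have h := hF.deriv
    rw [show pdx (Fcoef u) x t = deriv (fun y => Fcoef u y t) x from rfl, h]
    norm_num
    ring
  -- derivative of the t-slice of mDP
  have hm : HasDerivAt (fun s' => mDP u x s') (pdt u x t - pdt (pdx (pdx u)) x t) t := ta.sub tb
  have comm2 : pdt (pdx (pdx u)) x t = pdx (pdx (pdt u)) x t := by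
    have h1 : pdt (pdx u) = pdx (pdt u) :=
      funext fun a' => funext fun b' => pdt_pdx_comm hu a' b'
    calc pdt (pdx (pdx u)) x t = pdx (pdt (pdx u)) x t := pdt_pdx_comm (contDiff_pdx hu) x t
      _ = pdx (pdx (pdt u)) x t := by rw [h1]
  have hmt : pdt (mDP u) x t = pdt u x t - pdx (pdx (pdt u)) x t := by
    rw [show pdt (mDP u) x t = deriv (fun s' => mDP u x s') t from rfl, hm.deriv, comm2]
  -- slices as HasDerivAt with pdx/pdt values
  have hFslice : HasDerivAt (fun y => Fcoef u y t) (pdx (Fcoef u) x t) x :=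
    hF.differentiableAt.hasDerivAt
  have hmslice : HasDerivAt (fun s' => mDP u x s') (pdt (mDP u) x t) t :=
    hm.differentiableAt.hasDerivAt
  have hcx : ∀ k : ℝ, pdx (fun a' b' => k * Fcoef u a' b') x t = k * pdx (Fcoef u) x t :=
    fun k => (hFslice.const_mul k).deriv
  have hct : ∀ k c' : ℝ, pdt (fun a' b' => k * mDP u a' b' + c') x t = k * pdt (mDP u) x t :=
    fun k c' => ((hmslice.const_mul k).add_const c').deriv
  refine ⟨?_, ?_, ?_⟩
  · rw [hFx, hmt]
    simp only [mDP, Fcoef]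
    linear_combination (-1 : ℝ) * hDP x t
      + (2 * ((pdx u x t) ^ 2 - 2 * u x t * pdx u x t + u x t * pdx (pdx u) x t)) * hs
  · rw [hcx μ, hct μ (2 * s), hFx, hmt]
    simp only [mDP, Fcoef]
    linear_combination (-μ : ℝ) * hDP x t
  · rw [hcx s, hct s (2 * μ), hFx, hmt]
    simp only [mDP, Fcoef]
    linear_combination (-s : ℝ) * hDP x t
end

section
/- With the one-forms ω₁, ω₂ of the DP pseudospherical triad, one has ω₁∧ω₂ = ∓2√(1+μ²)(u_x² - 2uu_x + uu_{xx}) dx∧dt; in particular ω₁ and ω₂ are linearly independent at a point (x,t) if and only if (u_x² - 2uu_x + uu_{xx})(x,t) ≠ 0. -/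
/-- With `ω₁ = m dx + F dt` and `ω₂ = (μ m ± 2√(1+μ²))dx + μ F dt`
(`ε = ±1` encoding the sign choice), the wedge product is
`ω₁∧ω₂ = ∓2√(1+μ²) F dx∧dt`, so `ω₁, ω₂` are linearly independent at `(x,t)`
iff `F(x,t) = (u_x² - 2uu_x + uu_{xx})(x,t) ≠ 0`. -/
theorem DP_wedge_product (μ : ℝ) (ε : ℝ) (hε : ε = 1 ∨ ε = -1)
    (u : ℝ → ℝ → ℝ) (hu : ContDiff ℝ 2 (Function.uncurry u)) :
    ∀ x t : ℝ,
      (mDP u x t * (μ * Fcoef u x t)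
          - Fcoef u x t * (μ * mDP u x t + ε * 2 * Real.sqrt (1 + μ ^ 2))
        = -ε * 2 * Real.sqrt (1 + μ ^ 2) * Fcoef u x t) ∧
      ((mDP u x t * (μ * Fcoef u x t)
          - Fcoef u x t * (μ * mDP u x t + ε * 2 * Real.sqrt (1 + μ ^ 2)) ≠ 0)
        ↔ Fcoef u x t ≠ 0) := by
  intro x t
  have hsq : Real.sqrt (1 + μ ^ 2) ≠ 0 := by
    positivity
  have heq : mDP u x t * (μ * Fcoef u x t)
      - Fcoef u x t * (μ * mDP u x t + ε * 2 * Real.sqrt (1 + μ ^ 2))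
      = -ε * 2 * Real.sqrt (1 + μ ^ 2) * Fcoef u x t := by ring
  refine ⟨heq, ?_⟩
  rw [heq]
  have hε0 : ε ≠ 0 := by rcases hε with h | h <;> simp [h]
  constructor
  · intro h hF; apply h; rw [hF]; ring
  · intro hF h
    have := mul_ne_zero (mul_ne_zero (mul_ne_zero (neg_ne_zero.mpr hε0) two_ne_zero) hsq) hF
    exact this (by linarith [h])
end

section
/- Let m : ℝ → ℝ be integrable and u(x) = (G ∗ m)(x) with G(x) = e^{-|x|}/2. Then u(x) + u'(x) = e^{x} ∫_x^∞ e^{-η} m(η) dη and u(x) - u'(x) = e^{-x} ∫_{-∞}^x e^{η} m(η) dη for all x ∈ ℝ. -/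
/-!
The kernel `G(z) = e^{-|z|}/2` is bounded and Lipschitz, so `y ↦ G(x - y) m(y)` is Lipschitz in
`x` with integrable constant `Lip(G) |m(y)|`, and differentiation under the integral sign gives
`u' = G' ∗ m` at every point: by Rademacher, `G(x - ·)` is differentiable off a null set of `y`.
On `η < x` and on `η > x` both `G(x - η)` and `G'(x - η)` are `±½ e^{∓(x - η)}`, so `u` and `u'`
are combinations of `e^{-x} ∫_{-∞}^x e^η m` and `e^x ∫_x^∞ e^{-η} m` whose sum and difference are
the two formulae.
-/

open MeasureTheory Set
open scoped NNReal

theorem integrable_comp_sub_mul {k m : ℝ → ℝ} {C : ℝ} (hk : Measurable k)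
    (hkC : ∀ z, ‖k z‖ ≤ C) (hm : Integrable m) (x : ℝ) :
    Integrable fun y => k (x - y) * m y :=
  hm.bdd_mul (hk.comp (measurable_const.sub measurable_id)).aestronglyMeasurable
    (Filter.Eventually.of_forall fun y => hkC (x - y))

theorem LipschitzWith.comp_sub_const_mul_const {G : ℝ → ℝ} {K : ℝ≥0} (hG : LipschitzWith K G)
    (y c : ℝ) : LipschitzWith (K * ‖c‖₊) fun z => G (z - y) * c := by
  refine LipschitzWith.of_dist_le_mul fun a b => ?_
  have hGab := hG.dist_le_mul (a - y) (b - y)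
  rw [dist_sub_right] at hGab
  calc dist (G (a - y) * c) (G (b - y) * c) = dist (G (a - y)) (G (b - y)) * |c| := by
        rw [Real.dist_eq, Real.dist_eq, ← sub_mul, abs_mul]
    _ ≤ K * dist a b * |c| := by gcongr
    _ = ↑(K * ‖c‖₊) * dist a b := by push_cast [Real.norm_eq_abs]; ring

theorem hasDerivAt_integral_comp_sub_mul {G m : ℝ → ℝ} {K : ℝ≥0} {C : ℝ}
    (hG : LipschitzWith K G) (hGC : ∀ z, ‖G z‖ ≤ C) (hm : Integrable m) (x : ℝ) :
    HasDerivAt (fun x => ∫ y, G (x - y) * m y) (∫ y, deriv G (x - y) * m y) x := by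
  have hdiff : ∀ᵐ y, DifferentiableAt ℝ G (x - y) :=
    (Measure.measurePreserving_sub_left volume x).quasiMeasurePreserving.ae
      hG.ae_differentiableAt_real
  have hint : ∀ z, Integrable fun y => G (z - y) * m y :=
    integrable_comp_sub_mul hG.continuous.measurable hGC hm
  have hderiv_meas : AEStronglyMeasurable (fun y => deriv G (x - y) * m y) volume :=
    ((measurable_deriv G).comp (measurable_const.sub measurable_id)).aestronglyMeasurable.mul
      hm.aestronglyMeasurable
  refine (hasDerivAt_integral_of_dominated_loc_of_lip (bound := fun y => K * |m y|)
    Filter.univ_mem (Filter.Eventually.of_forall fun z => (hint z).aestronglyMeasurable) (hint x)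
    hderiv_meas (Filter.Eventually.of_forall fun y => ?_) (hm.abs.const_mul K) ?_).2
  · rw [lipschitzOnWith_univ]
    convert hG.comp_sub_const_mul_const y (m y) using 1
    ext
    simp
  · filter_upwards [hdiff] with y hy
    exact (hy.hasDerivAt.comp_sub_const x y).mul_const (m y)

theorem integral_comp_sub_mul_eq_of_exp {k m : ℝ → ℝ} {x a b : ℝ}
    (hint : Integrable fun y => k (x - y) * m y)
    (hpos : ∀ z, 0 < z → k z = a * Real.exp (-z)) (hneg : ∀ z, z < 0 → k z = b * Real.exp z) :
    ∫ y, k (x - y) * m y = a * Real.exp (-x) * (∫ η in Iio x, Real.exp η * m η) +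
      b * Real.exp x * ∫ η in Ioi x, Real.exp (-η) * m η := by
  rw [← intervalIntegral.integral_Iio_add_Ici hint.integrableOn hint.integrableOn,
    integral_Ici_eq_integral_Ioi, ← integral_const_mul, ← integral_const_mul]
  congr 1
  · refine setIntegral_congr_fun measurableSet_Iio fun y (hy : y < x) => ?_
    rw [hpos _ (sub_pos.2 hy), neg_sub, sub_eq_add_neg, Real.exp_add]
    ring
  · refine setIntegral_congr_fun measurableSet_Ioi fun y (hy : x < y) => ?_
    rw [hneg _ (sub_neg.2 hy), sub_eq_add_neg, Real.exp_add]
    ring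

noncomputable def greenKernel (z : ℝ) : ℝ := Real.exp (-|z|) / 2

theorem norm_greenKernel_le (z : ℝ) : ‖greenKernel z‖ ≤ 2⁻¹ := by
  rw [Real.norm_eq_abs, greenKernel, abs_of_pos (by positivity), div_eq_mul_inv]
  exact mul_le_of_le_one_left (by norm_num) (Real.exp_le_one_iff.2 (neg_nonpos.2 (abs_nonneg z)))

theorem lipschitzWith_greenKernel : LipschitzWith 2⁻¹ greenKernel := by
  have hexp : LipschitzOnWith 2⁻¹ (fun t => Real.exp t / 2) (Iic 0) := by
    refine Convex.lipschitzOnWith_of_nnnorm_deriv_le (fun t _ => by fun_prop) (fun t ht => ?_)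
      (convex_Iic 0)
    rw [← NNReal.coe_le_coe, coe_nnnorm]
    simp only [deriv_div_const, Real.deriv_exp, Real.norm_eq_abs, abs_div, Real.abs_exp]
    rw [abs_two, div_eq_mul_inv, NNReal.coe_inv, NNReal.coe_ofNat]
    exact mul_le_of_le_one_left (by norm_num) (Real.exp_le_one_iff.2 ht)
  have habs : LipschitzWith 1 fun z : ℝ => -|z| := (lipschitzWith_one_norm (E := ℝ)).neg
  rw [← lipschitzOnWith_univ, ← mul_one (2⁻¹ : ℝ≥0)]
  exact hexp.comp habs.lipschitzOnWith fun z _ => neg_nonpos.2 (abs_nonneg z)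

theorem greenKernel_of_pos {z : ℝ} (hz : 0 < z) : greenKernel z = 2⁻¹ * Real.exp (-z) := by
  rw [greenKernel, abs_of_pos hz]
  ring

theorem greenKernel_of_neg {z : ℝ} (hz : z < 0) : greenKernel z = 2⁻¹ * Real.exp z := by
  rw [greenKernel, abs_of_neg hz, neg_neg]
  ring

theorem deriv_greenKernel_of_pos {z : ℝ} (hz : 0 < z) :
    deriv greenKernel z = -2⁻¹ * Real.exp (-z) := by
  have hG : greenKernel =ᶠ[nhds z] fun t => 2⁻¹ * Real.exp (-t) :=
    Filter.eventually_of_mem (Ioi_mem_nhds hz) fun t ht => greenKernel_of_pos ht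
  rw [hG.deriv_eq, ((hasDerivAt_neg z).exp.const_mul 2⁻¹).deriv]
  ring

theorem deriv_greenKernel_of_neg {z : ℝ} (hz : z < 0) :
    deriv greenKernel z = 2⁻¹ * Real.exp z := by
  have hG : greenKernel =ᶠ[nhds z] fun t => 2⁻¹ * Real.exp t :=
    Filter.eventually_of_mem (Iio_mem_nhds hz) fun t ht => greenKernel_of_neg ht
  rw [hG.deriv_eq, ((Real.hasDerivAt_exp z).const_mul 2⁻¹).deriv]

/-- For `m ∈ L¹` and `u = G ∗ m`, `G(x)=e^{-|x|}/2`, one has the representation formulae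
`u + u' = eˣ ∫_x^∞ e^{-η} m(η) dη` and `u - u' = e^{-x} ∫_{-∞}^x e^{η} m(η) dη`. -/
theorem convolution_representation (m : ℝ → ℝ) (hm : Integrable m)
    (u : ℝ → ℝ) (hu : ∀ x : ℝ, u x = ∫ y : ℝ, (Real.exp (-|x - y|) / 2) * m y) :
    ∀ x : ℝ,
      u x + deriv u x = Real.exp x * ∫ η in Ioi x, Real.exp (-η) * m η ∧
      u x - deriv u x = Real.exp (-x) * ∫ η in Iio x, Real.exp η * m η := by
  intro x
  have hu_eq : u = fun x => ∫ y, greenKernel (x - y) * m y := funext hu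
  have hu_split := integral_comp_sub_mul_eq_of_exp
    (integrable_comp_sub_mul lipschitzWith_greenKernel.continuous.measurable norm_greenKernel_le
      hm x)
    (fun _ => greenKernel_of_pos) (fun _ => greenKernel_of_neg)
  have hderiv_split := integral_comp_sub_mul_eq_of_exp
    (integrable_comp_sub_mul (measurable_deriv greenKernel)
      (fun _ => norm_deriv_le_of_lipschitz lipschitzWith_greenKernel) hm x)
    (fun _ => deriv_greenKernel_of_pos) (fun _ => deriv_greenKernel_of_neg)
  rw [hu_eq, (hasDerivAt_integral_comp_sub_mul lipschitzWith_greenKernel norm_greenKernel_le hm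
    x).deriv]
  dsimp only
  rw [hu_split, hderiv_split]
  constructor <;> ring
end

section
/- Let m ∈ L¹(ℝ) be continuous, q ∈ ℝ, and suppose m ≤ 0 on [q,∞) and m ≥ 0 on (-∞,q]. Let u = G∗m with G(x)=e^{-|x|}/2. Then ∫_q^∞ e^{-x} (u(x)² - u'(x)²) dx ≥ e^{-q} M I, where M = e^{q}∫_q^∞ e^{-η} m(η) dη and I = e^{-q}∫_{-∞}^q e^{η} m(η) dη; in particular u(q)² - u'(q)² = M I ≤ 0. -/
/-! With `A x = ∫_{-∞}^x e^y m(y) dy` and `B x = ∫_x^∞ e^{-y} m(y) dy`, splitting the kernel at `x`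
gives `u = (e^{-x} A + e^x B) / 2` and `u' = (e^x B - e^{-x} A) / 2`, so that `u + u' = e^x B`,
`u - u' = e^{-x} A` and `u² - u'² = A B`. On `[q, ∞)` the sign conditions make `A` decrease from
`A q ≥ 0` and `B` increase towards `0`, whence `A x B x ≥ A x B q ≥ A q B q`; integrating against
`e^{-x}` over `(q, ∞)` gives the estimate. -/

open MeasureTheory Set Real

section Primitive

variable {E : Type*} [NormedAddCommGroup E] [NormedSpace ℝ E] [CompleteSpace E] {f : ℝ → E}

theorem hasDerivAt_integral_Iic (hf : Continuous f) (hint : ∀ x, IntegrableOn f (Iic x))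
    (x : ℝ) : HasDerivAt (fun t => ∫ y in Iic t, f y) (f x) x := by
  have hsplit : (fun t => ∫ y in Iic t, f y) = fun t => (∫ y in Iic x, f y) + ∫ y in x..t, f y := by
    funext t
    rw [← intervalIntegral.integral_Iic_sub_Iic (hint x) (hint t), add_sub_cancel]
  rw [hsplit]
  exact (intervalIntegral.integral_hasDerivAt_right (hf.intervalIntegrable x x)
    (hf.stronglyMeasurableAtFilter _ _) hf.continuousAt).const_add _

theorem hasDerivAt_integral_Ioi (hf : Continuous f) (hint : ∀ x, IntegrableOn f (Ioi x))
    (x : ℝ) : HasDerivAt (fun t => ∫ y in Ioi t, f y) (-f x) x := by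
  have hsplit : (fun t => ∫ y in Ioi t, f y) = fun t => (∫ y in Ioi x, f y) - ∫ y in x..t, f y := by
    funext t
    rw [← intervalIntegral.integral_Ioi_sub_Ioi' (hint x) (hint t), sub_sub_cancel]
  rw [hsplit]
  exact (intervalIntegral.integral_hasDerivAt_right (hf.intervalIntegrable x x)
    (hf.stronglyMeasurableAtFilter _ _) hf.continuousAt).const_sub _

end Primitive

theorem norm_exp_mul_le {x y : ℝ} (h : y ≤ x) (a : ℝ) : ‖exp y * a‖ ≤ exp x * ‖a‖ := by
  rw [norm_mul, norm_of_nonneg (exp_pos y).le]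
  exact mul_le_mul_of_nonneg_right (exp_le_exp.2 h) (norm_nonneg a)

noncomputable def leftExpIntegral (m : ℝ → ℝ) (x : ℝ) : ℝ := ∫ y in Iic x, exp y * m y

noncomputable def rightExpIntegral (m : ℝ → ℝ) (x : ℝ) : ℝ := ∫ y in Ioi x, exp (-y) * m y

section ExpIntegrals

variable {m : ℝ → ℝ}

theorem MeasureTheory.Integrable.integrableOn_exp_mul_Iic (hm : Integrable m) (x : ℝ) :
    IntegrableOn (fun y => exp y * m y) (Iic x) :=
  Integrable.mono' (hm.norm.const_mul (exp x)).restrict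
    (continuous_exp.aestronglyMeasurable.mul hm.aestronglyMeasurable).restrict
    (ae_restrict_of_forall_mem measurableSet_Iic fun _ hy => norm_exp_mul_le hy _)

theorem MeasureTheory.Integrable.integrableOn_exp_neg_mul_Ioi (hm : Integrable m) (x : ℝ) :
    IntegrableOn (fun y => exp (-y) * m y) (Ioi x) :=
  Integrable.mono' (hm.norm.const_mul (exp (-x))).restrict
    ((continuous_exp.comp continuous_neg).aestronglyMeasurable.mul hm.aestronglyMeasurable).restrict
    (ae_restrict_of_forall_mem measurableSet_Ioi fun _ hy => norm_exp_mul_le (neg_le_neg hy.le) _)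

theorem norm_leftExpIntegral_le (hm : Integrable m) (x : ℝ) :
    ‖leftExpIntegral m x‖ ≤ exp x * ∫ y, ‖m y‖ :=
  calc ‖leftExpIntegral m x‖ ≤ ∫ y in Iic x, exp x * ‖m y‖ :=
        norm_integral_le_of_norm_le (hm.norm.const_mul _).restrict
          (ae_restrict_of_forall_mem measurableSet_Iic fun _ hy => norm_exp_mul_le hy _)
    _ ≤ ∫ y, exp x * ‖m y‖ :=
        setIntegral_le_integral (hm.norm.const_mul _) (.of_forall fun _ => by positivity)
    _ = exp x * ∫ y, ‖m y‖ := integral_const_mul _ _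

theorem norm_rightExpIntegral_le (hm : Integrable m) (x : ℝ) :
    ‖rightExpIntegral m x‖ ≤ exp (-x) * ∫ y, ‖m y‖ :=
  calc ‖rightExpIntegral m x‖ ≤ ∫ y in Ioi x, exp (-x) * ‖m y‖ :=
        norm_integral_le_of_norm_le (hm.norm.const_mul _).restrict
          (ae_restrict_of_forall_mem measurableSet_Ioi fun _ hy =>
            norm_exp_mul_le (neg_le_neg hy.le) _)
    _ ≤ ∫ y, exp (-x) * ‖m y‖ :=
        setIntegral_le_integral (hm.norm.const_mul _) (.of_forall fun _ => by positivity)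
    _ = exp (-x) * ∫ y, ‖m y‖ := integral_const_mul _ _

theorem norm_leftExpIntegral_mul_rightExpIntegral_le (hm : Integrable m) (x : ℝ) :
    ‖leftExpIntegral m x * rightExpIntegral m x‖ ≤ (∫ y, ‖m y‖) ^ 2 :=
  calc ‖leftExpIntegral m x * rightExpIntegral m x‖
      ≤ (exp x * ∫ y, ‖m y‖) * (exp (-x) * ∫ y, ‖m y‖) := by
        rw [norm_mul]
        exact mul_le_mul (norm_leftExpIntegral_le hm x) (norm_rightExpIntegral_le hm x)
          (norm_nonneg _) (by positivity)
    _ = (∫ y, ‖m y‖) ^ 2 := by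
        rw [mul_mul_mul_comm, ← exp_add, add_neg_cancel, exp_zero, one_mul, sq]

theorem hasDerivAt_leftExpIntegral (hmc : Continuous m) (hm : Integrable m) (x : ℝ) :
    HasDerivAt (leftExpIntegral m) (exp x * m x) x :=
  hasDerivAt_integral_Iic (continuous_exp.mul hmc) hm.integrableOn_exp_mul_Iic x

theorem hasDerivAt_rightExpIntegral (hmc : Continuous m) (hm : Integrable m) (x : ℝ) :
    HasDerivAt (rightExpIntegral m) (-(exp (-x) * m x)) x :=
  hasDerivAt_integral_Ioi ((continuous_exp.comp continuous_neg).mul hmc)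
    hm.integrableOn_exp_neg_mul_Ioi x

theorem integral_exp_neg_abs_sub_mul (hm : Integrable m) (x : ℝ) :
    ∫ y, exp (-|x - y|) / 2 * m y
      = (exp (-x) * leftExpIntegral m x + exp x * rightExpIntegral m x) / 2 := by
  have hint : Integrable fun y => exp (-|x - y|) / 2 * m y :=
    hm.bdd_mul (c := 1)
      (by fun_prop : Continuous fun y => exp (-|x - y|) / 2).aestronglyMeasurable
      (.of_forall fun y => by
        rw [norm_of_nonneg (by positivity)]
        linarith [exp_le_one_iff.2 (neg_nonpos.2 (abs_nonneg (x - y)))])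
  have hleft : ∫ y in Iic x, exp (-|x - y|) / 2 * m y = exp (-x) / 2 * leftExpIntegral m x := by
    rw [leftExpIntegral, ← integral_const_mul]
    refine setIntegral_congr_fun measurableSet_Iic fun y (hy : y ≤ x) => ?_
    rw [abs_of_nonneg (sub_nonneg.2 hy), neg_sub, sub_eq_add_neg, exp_add]
    ring
  have hright : ∫ y in Ioi x, exp (-|x - y|) / 2 * m y = exp x / 2 * rightExpIntegral m x := by
    rw [rightExpIntegral, ← integral_const_mul]
    refine setIntegral_congr_fun measurableSet_Ioi fun y (hy : x < y) => ?_
    rw [abs_of_neg (sub_neg.2 hy), neg_neg, sub_eq_add_neg, exp_add]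
    ring
  rw [← intervalIntegral.integral_Iic_add_Ioi hint.integrableOn hint.integrableOn, hleft, hright]
  ring

theorem hasDerivAt_of_eq_integral_exp_neg_abs_sub (hmc : Continuous m) (hm : Integrable m)
    {u : ℝ → ℝ} (hu : ∀ x, u x = ∫ y, exp (-|x - y|) / 2 * m y) (x : ℝ) :
    HasDerivAt u ((exp x * rightExpIntegral m x - exp (-x) * leftExpIntegral m x) / 2) x := by
  have hu' : u = fun t => (exp (-t) * leftExpIntegral m t + exp t * rightExpIntegral m t) / 2 :=
    funext fun t => (hu t).trans (integral_exp_neg_abs_sub_mul hm t)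
  have hexpneg : HasDerivAt (fun t => exp (-t)) (-exp (-x)) x := by
    simpa using (hasDerivAt_neg x).exp
  rw [hu']
  refine (((hexpneg.mul (hasDerivAt_leftExpIntegral hmc hm x)).add
    ((hasDerivAt_exp x).mul (hasDerivAt_rightExpIntegral hmc hm x))).div_const 2).congr_deriv ?_
  ring

theorem sq_sub_deriv_sq_eq_of_eq_integral_exp_neg_abs_sub (hmc : Continuous m)
    (hm : Integrable m) {u : ℝ → ℝ} (hu : ∀ x, u x = ∫ y, exp (-|x - y|) / 2 * m y) (x : ℝ) :
    u x ^ 2 - deriv u x ^ 2 = leftExpIntegral m x * rightExpIntegral m x := by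
  rw [(hasDerivAt_of_eq_integral_exp_neg_abs_sub hmc hm hu x).deriv, hu x,
    integral_exp_neg_abs_sub_mul hm x]
  calc _ = (exp (-x) * exp x) * (leftExpIntegral m x * rightExpIntegral m x) := by ring
    _ = _ := by rw [← exp_add, neg_add_cancel, exp_zero, one_mul]

variable {q : ℝ}

theorem leftExpIntegral_nonneg (hpos : ∀ x ∈ Iic q, 0 ≤ m x) : 0 ≤ leftExpIntegral m q :=
  setIntegral_nonneg measurableSet_Iic fun y hy => mul_nonneg (exp_pos y).le (hpos y hy)

theorem rightExpIntegral_nonpos (hneg : ∀ x ∈ Ici q, m x ≤ 0) {x : ℝ} (hx : q ≤ x) :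
    rightExpIntegral m x ≤ 0 :=
  setIntegral_nonpos measurableSet_Ioi fun y (hy : x < y) =>
    mul_nonpos_of_nonneg_of_nonpos (exp_pos _).le (hneg y (hx.trans hy.le))

theorem antitoneOn_leftExpIntegral (hmc : Continuous m) (hm : Integrable m)
    (hneg : ∀ x ∈ Ici q, m x ≤ 0) : AntitoneOn (leftExpIntegral m) (Ici q) :=
  antitoneOn_of_hasDerivWithinAt_nonpos (convex_Ici q)
    (fun x _ => (hasDerivAt_leftExpIntegral hmc hm x).continuousAt.continuousWithinAt)
    (fun x _ => (hasDerivAt_leftExpIntegral hmc hm x).hasDerivWithinAt)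
    (fun x hx => mul_nonpos_of_nonneg_of_nonpos (exp_pos x).le (hneg x (interior_subset hx)))

theorem monotoneOn_rightExpIntegral (hmc : Continuous m) (hm : Integrable m)
    (hneg : ∀ x ∈ Ici q, m x ≤ 0) : MonotoneOn (rightExpIntegral m) (Ici q) :=
  monotoneOn_of_hasDerivWithinAt_nonneg (convex_Ici q)
    (fun x _ => (hasDerivAt_rightExpIntegral hmc hm x).continuousAt.continuousWithinAt)
    (fun x _ => (hasDerivAt_rightExpIntegral hmc hm x).hasDerivWithinAt)
    (fun x hx => neg_nonneg.2 <|
      mul_nonpos_of_nonneg_of_nonpos (exp_pos _).le (hneg x (interior_subset hx)))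

theorem leftExpIntegral_mul_rightExpIntegral_le (hmc : Continuous m) (hm : Integrable m)
    (hneg : ∀ x ∈ Ici q, m x ≤ 0) (hpos : ∀ x ∈ Iic q, 0 ≤ m x) {x : ℝ} (hx : q ≤ x) :
    leftExpIntegral m q * rightExpIntegral m q ≤ leftExpIntegral m x * rightExpIntegral m x := by
  have hA := antitoneOn_leftExpIntegral hmc hm hneg self_mem_Ici hx hx
  have hB := monotoneOn_rightExpIntegral hmc hm hneg self_mem_Ici hx hx
  have hA₀ := leftExpIntegral_nonneg hpos
  have hB₀ := rightExpIntegral_nonpos hneg hx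
  nlinarith

theorem exp_neg_mul_le_integral_Ioi (hmc : Continuous m) (hm : Integrable m)
    (hneg : ∀ x ∈ Ici q, m x ≤ 0) (hpos : ∀ x ∈ Iic q, 0 ≤ m x) :
    exp (-q) * (leftExpIntegral m q * rightExpIntegral m q)
      ≤ ∫ x in Ioi q, exp (-x) * (leftExpIntegral m x * rightExpIntegral m x) := by
  have hcont : Continuous fun x => leftExpIntegral m x * rightExpIntegral m x :=
    (continuous_iff_continuousAt.2 fun x => (hasDerivAt_leftExpIntegral hmc hm x).continuousAt).mul
      (continuous_iff_continuousAt.2 fun x => (hasDerivAt_rightExpIntegral hmc hm x).continuousAt)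
  have hint : IntegrableOn (fun x => exp (-x) * (leftExpIntegral m x * rightExpIntegral m x))
      (Ioi q) :=
    (integrableOn_exp_neg_Ioi q).mul_bdd hcont.aestronglyMeasurable
      (.of_forall (norm_leftExpIntegral_mul_rightExpIntegral_le hm))
  calc exp (-q) * (leftExpIntegral m q * rightExpIntegral m q)
      = ∫ x in Ioi q, exp (-x) * (leftExpIntegral m q * rightExpIntegral m q) := by
        rw [integral_mul_const, integral_exp_neg_Ioi]
    _ ≤ _ := setIntegral_mono_on ((integrableOn_exp_neg_Ioi q).mul_const _) hint measurableSet_Ioi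
        fun x hx => mul_le_mul_of_nonneg_left
          (leftExpIntegral_mul_rightExpIntegral_le hmc hm hneg hpos (le_of_lt hx)) (exp_pos _).le

end ExpIntegrals

/-- Key convolution estimate of the blow-up proof: if `m ≤ 0` on `[q,∞)` and `m ≥ 0` on
`(-∞,q]`, and `u = G∗m`, then `∫_q^∞ e^{-x}(u² - (u')²) dx ≥ e^{-q} M I`, where
`M = e^q ∫_q^∞ e^{-η} m dη` and `I = e^{-q} ∫_{-∞}^q e^{η} m dη`; in particular
`u(q)² - u'(q)² = M I ≤ 0`. -/
theorem blowup_convolution_estimate (m : ℝ → ℝ) (hmc : Continuous m) (hm : Integrable m)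
    (q : ℝ) (hneg : ∀ x ∈ Ici q, m x ≤ 0) (hpos : ∀ x ∈ Iic q, 0 ≤ m x)
    (u : ℝ → ℝ) (hu : ∀ x : ℝ, u x = ∫ y : ℝ, (Real.exp (-|x - y|) / 2) * m y) :
    (∫ x in Ioi q, Real.exp (-x) * ((u x) ^ 2 - (deriv u x) ^ 2))
        ≥ Real.exp (-q) * ((Real.exp q * ∫ η in Ioi q, Real.exp (-η) * m η)
          * (Real.exp (-q) * ∫ η in Iio q, Real.exp η * m η)) ∧
    (u q) ^ 2 - (deriv u q) ^ 2
        = (Real.exp q * ∫ η in Ioi q, Real.exp (-η) * m η)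
          * (Real.exp (-q) * ∫ η in Iio q, Real.exp η * m η) ∧
    (Real.exp q * ∫ η in Ioi q, Real.exp (-η) * m η)
        * (Real.exp (-q) * ∫ η in Iio q, Real.exp η * m η) ≤ 0 := by
  have hMI : (exp q * ∫ η in Ioi q, exp (-η) * m η) * (exp (-q) * ∫ η in Iio q, exp η * m η)
      = leftExpIntegral m q * rightExpIntegral m q := by
    rw [← integral_Iic_eq_integral_Iio, mul_mul_mul_comm, ← exp_add, add_neg_cancel, exp_zero,
      one_mul, mul_comm]
    rfl
  have hid := sq_sub_deriv_sq_eq_of_eq_integral_exp_neg_abs_sub hmc hm hu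
  rw [hMI, hid q]
  refine ⟨?_, rfl,
    mul_nonpos_of_nonneg_of_nonpos (leftExpIntegral_nonneg hpos)
      (rightExpIntegral_nonpos hneg le_rfl)⟩
  simpa only [hid] using exp_neg_mul_le_integral_Ioi hmc hm hneg hpos
end
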